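/- arXiv:2109.09874 — 5 statements merged into one kernel-verified Lean document; each statement's English description precedes it below -/
import Mathlib

section
/- (Lower bound for visibility-restricted unit-disk graphs, graph-theoretic form.) For integers r ≥ 1 and m ≥ 1, let G_{r,m} be the simple graph whose vertex set is {0,1} × {1,…,r} × {1,…,m}, in which two distinct vertices (a,i,x) and (b,j,y) are adjacent if and only if a ≠ b, or (a = b and i = j). Then every clique-based separator of G_{r,m} with balance 2/3 has weight at least (r/3)·log₂(m+1). -/
open scoped BigOperators ENNReal

noncomputable section

/-- The Euclidean plane. -/
abbrev Plane : Type := EuclideanSpace ℝ (Fin 2)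

/-- The closed unit disk in the plane. -/
def unitDisk : Set Plane := Metric.closedBall 0 1

/-- `s` is homeomorphic to the closed unit disk. -/
def HomeoToDisk (s : Set Plane) : Prop := Nonempty (s ≃ₜ unitDisk)

/-- The intersection graph of an indexed family of planar sets: distinct indices are
adjacent iff the corresponding sets intersect. -/
def interGraph {I : Type*} (F : I → Set Plane) : SimpleGraph I where
  Adj i j := i ≠ j ∧ (F i ∩ F j).Nonempty
  symm := by
    constructor
    intro i j h
    exact ⟨h.1.symm, by rw [Set.inter_comm]; exact h.2⟩
  loopless := by
    constructor
    intro i h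
    exact h.1 rfl

/-- `S` is a clique-based separator with balance `2/3` of the finite simple graph `G`:
a family of pairwise disjoint cliques such that every connected component of the subgraph
induced on the vertices belonging to no clique of `S` has at most `2n/3` vertices. -/
def IsCBSep {V : Type*} [Fintype V] (G : SimpleGraph V) (S : Finset (Finset V)) : Prop :=
  (∀ C ∈ S, G.IsClique (C : Set V)) ∧
  ((S : Set (Finset V)).Pairwise fun C C' => Disjoint C C') ∧
  ∀ c : (G.induce {v : V | ∀ C ∈ S, v ∉ C}).ConnectedComponent,
    3 * c.supp.ncard ≤ 2 * Fintype.card V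

/-- The weight of a clique-based separator: `∑_{C ∈ S} log₂(|C|+1)`. -/
def sepWeight {V : Type*} (S : Finset (Finset V)) : ℝ :=
  ∑ C ∈ S, Real.logb 2 ((C.card : ℝ) + 1)

/-- A family of pseudo-disks: compact sets homeomorphic to the closed unit disk such that
any two distinct members have frontiers meeting in at most two points. -/
def IsPseudoDiskFamily {I : Type*} (F : I → Set Plane) : Prop :=
  (∀ i, IsCompact (F i)) ∧ (∀ i, HomeoToDisk (F i)) ∧
  ∀ i j : I, i ≠ j → ∃ p q : Plane, frontier (F i) ∩ frontier (F j) ⊆ {p, q}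

/-- A simple polygon: a compact set homeomorphic to the closed unit disk whose frontier is
a union of finitely many nondegenerate closed line segments. -/
def IsSimplePolygon (P : Set Plane) : Prop :=
  IsCompact P ∧ HomeoToDisk P ∧
  ∃ E : Finset (Plane × Plane), (∀ e ∈ E, e.1 ≠ e.2) ∧
    frontier P = ⋃ e ∈ E, segment ℝ e.1 e.2

/-- A polygonal region (possibly with holes): a compact set equal to the closure of its
interior whose frontier is a union of finitely many nondegenerate closed line segments. -/
def IsPolygonalRegion (P : Set Plane) : Prop :=
  IsCompact P ∧ P = closure (interior P) ∧
  ∃ E : Finset (Plane × Plane), (∀ e ∈ E, e.1 ≠ e.2) ∧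
    frontier P = ⋃ e ∈ E, segment ℝ e.1 e.2

/-- A reflex vertex of `P`: a frontier point `v` such that for all sufficiently small
`ρ > 0` the set of points of `P` within distance `ρ` of `v` is not convex. -/
def IsReflexVertex (P : Set Plane) (v : Plane) : Prop :=
  v ∈ frontier P ∧ ∃ ρ₀ > (0:ℝ), ∀ ρ : ℝ, 0 < ρ → ρ ≤ ρ₀ →
    ¬ Convex ℝ (P ∩ Metric.closedBall v ρ)

/-- The geodesic distance in `P`: the infimum of the lengths (total variations) of
continuous paths in `P` from `p` to `q` (in `ℝ≥0∞`). -/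
def geoDist (P : Set Plane) (p q : Plane) : ℝ≥0∞ :=
  ⨅ f ∈ {f : ℝ → Plane | ContinuousOn f (Set.Icc 0 1) ∧
      Set.MapsTo f (Set.Icc 0 1) P ∧ f 0 = p ∧ f 1 = q},
    eVariationOn f (Set.Icc 0 1)

/-- The geodesic disk in `P` with center `q` and radius `r`. -/
def geoDisk (P : Set Plane) (q : Plane) (r : ℝ) : Set Plane :=
  {p | p ∈ P ∧ geoDist P p q ≤ ENNReal.ofReal r}

/-- The line through `c` with direction `d`. -/
def lineThrough (c d : Plane) : Set Plane := {x | ∃ t : ℝ, x = c + t • d}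

/-- The visibility-restricted unit-disk graph of a finite point set `Q` inside `P`:
distinct points are adjacent iff they are at distance at most 1 and the segment joining
them lies in `P`. -/
def visGraph (P : Set Plane) (Q : Finset Plane) : SimpleGraph ↥Q where
  Adj p q := p ≠ q ∧ dist (p : Plane) (q : Plane) ≤ 1 ∧ segment ℝ (p : Plane) (q : Plane) ⊆ P
  symm := by
    constructor
    intro p q h
    refine ⟨h.1.symm, by rw [dist_comm]; exact h.2.1, by rw [segment_symm]; exact h.2.2⟩
  loopless := by
    constructor
    intro p h
    exact h.1 rfl

/-- The graph `G_{r,m}` on `{0,1} × {1,…,r} × {1,…,m}`: two distinct vertices `(a,i,x)`,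
`(b,j,y)` are adjacent iff `a ≠ b`, or (`a = b` and `i = j`). -/
def combGraph (r m : ℕ) : SimpleGraph (Fin 2 × Fin r × Fin m) where
  Adj v w := v ≠ w ∧ (v.1 ≠ w.1 ∨ (v.1 = w.1 ∧ v.2.1 = w.2.1))
  symm := by
    constructor
    intro v w h
    refine ⟨h.1.symm, ?_⟩
    rcases h.2 with h' | ⟨h', h''⟩
    · exact Or.inl h'.symm
    · exact Or.inr ⟨h'.symm, h''.symm⟩
  loopless := by
    constructor
    intro v h
    exact h.1 rfl

/-- The `k × k` grid graph: vertices adjacent iff at `L1`-distance exactly 1. -/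
def gridGraph (k : ℕ) : SimpleGraph (Fin k × Fin k) where
  Adj v w := Nat.dist (v.1 : ℕ) (w.1 : ℕ) + Nat.dist (v.2 : ℕ) (w.2 : ℕ) = 1
  symm := by
    constructor
    intro v w h
    rw [Nat.dist_comm (w.1 : ℕ) (v.1 : ℕ), Nat.dist_comm (w.2 : ℕ) (v.2 : ℕ)]
    exact h
  loopless := by
    constructor
    intro v h
    simp [Nat.dist_self] at h

/-- The children of `v` in the tree `G` rooted at `root`: neighbors one level deeper. -/
def treeChildren {V : Type*} (G : SimpleGraph V) (root v : V) : Set V :=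
  {w | G.Adj v w ∧ G.dist root w = G.dist root v + 1}

/-- A leaf of the tree `G` rooted at `root`: a node with no children. -/
def IsTreeLeaf {V : Type*} (G : SimpleGraph V) (root v : V) : Prop :=
  treeChildren G root v = ∅

end

/-!
A clique of `G_{r,m}` meets each side in a single cluster, so it has at most `2m` vertices.
If the vertices left uncovered by the separator lie on both sides, they induce a connected
graph (any two of them are joined through the other side), so at most `4rm/3` of them remain;
otherwise a whole side of `rm` vertices is covered. Either way the cliques cover at least
`2rm/3` vertices. Concavity of `log₂ (· + 1)` then gives
`log₂ (|C| + 1) ≥ |C|/(2m) · log₂ (2m + 1)` for every clique, and summing over the disjoint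
cliques yields the bound.
-/

open Finset SimpleGraph

lemma div_mul_log_add_one_le {s K : ℝ} (hK : 0 < K) (hs : 0 ≤ s) (hsK : s ≤ K) :
    s / K * Real.log (K + 1) ≤ Real.log (s + 1) := by
  have h := strictConcaveOn_log_Ioi.concaveOn.2 (Set.mem_Ioi.2 one_pos)
    (Set.mem_Ioi.2 (by linarith : (0 : ℝ) < K + 1)) (sub_nonneg.2 ((div_le_one hK).2 hsK))
    (div_nonneg hs hK.le) (sub_add_cancel 1 (s / K))
  have hpoint : (1 - s / K) • (1 : ℝ) + (s / K) • (K + 1) = s + 1 := by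
    simp only [smul_eq_mul]
    field_simp
    ring
  rw [hpoint] at h
  simpa using h

lemma div_mul_logb_add_one_le {b s K : ℝ} (hb : 1 < b) (hK : 0 < K) (hs : 0 ≤ s) (hsK : s ≤ K) :
    s / K * Real.logb b (K + 1) ≤ Real.logb b (s + 1) := by
  simp only [Real.logb, ← mul_div_assoc]
  exact div_le_div_of_nonneg_right (div_mul_log_add_one_le hK hs hsK) (Real.log_pos hb).le

lemma card_biUnion_div_mul_logb_le_sepWeight {V : Type*} [DecidableEq V] {S : Finset (Finset V)}
    {K : ℝ} (hdisj : (S : Set (Finset V)).PairwiseDisjoint id) (hK : 0 < K)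
    (hcard : ∀ C ∈ S, (#C : ℝ) ≤ K) :
    #(S.biUnion id) / K * Real.logb 2 (K + 1) ≤ sepWeight S := by
  rw [card_biUnion hdisj, Nat.cast_sum, sum_div, sum_mul]
  exact sum_le_sum fun C hC =>
    div_mul_logb_add_one_le one_lt_two hK (Nat.cast_nonneg _) (hcard C hC)

lemma IsCBSep.three_mul_ncard_le_of_preconnected {V : Type*} [Fintype V] {G : SimpleGraph V}
    {S : Finset (Finset V)} (hS : IsCBSep G S)
    (hconn : (G.induce {v | ∀ C ∈ S, v ∉ C}).Preconnected) :
    3 * {v | ∀ C ∈ S, v ∉ C}.ncard ≤ 2 * Fintype.card V := by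
  rcases Set.eq_empty_or_nonempty {v | ∀ C ∈ S, v ∉ C} with hU | ⟨v, hv⟩
  · simp [hU]
  · have hsupp : ((G.induce _).connectedComponentMk ⟨v, hv⟩).supp = Set.univ :=
      Set.eq_univ_of_forall fun w => ConnectedComponent.sound (hconn w _)
    have hc := hS.2.2 ((G.induce _).connectedComponentMk ⟨v, hv⟩)
    rwa [hsupp, Set.ncard_univ, Nat.card_coe_set_eq] at hc

lemma combGraph_isClique_card_le {r m : ℕ} {C : Finset (Fin 2 × Fin r × Fin m)}
    (hC : (combGraph r m).IsClique (C : Set (Fin 2 × Fin r × Fin m))) : #C ≤ 2 * m := by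
  have hinj : Set.InjOn (fun v : Fin 2 × Fin r × Fin m => (v.1, v.2.2)) C := by
    intro u hu w hw huw
    by_contra hne
    obtain ⟨hside, hpos⟩ := Prod.mk.inj huw
    rcases (hC hu hw hne).2 with hside' | ⟨-, hcluster⟩
    · exact hside' hside
    · exact hne (Prod.ext hside (Prod.ext hcluster hpos))
  simpa using card_le_card_of_injOn (t := univ) _ (fun _ _ => mem_univ _) hinj

lemma combGraph_induce_preconnected {r m : ℕ} {T : Set (Fin 2 × Fin r × Fin m)}
    (h0 : ∃ v ∈ T, v.1 = 0) (h1 : ∃ v ∈ T, v.1 = 1) :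
    ((combGraph r m).induce T).Preconnected := by
  have hadj : ∀ u w : T, u.1.1 ≠ w.1.1 → ((combGraph r m).induce T).Adj u w :=
    fun u w h => ⟨fun he => h (congrArg Prod.fst he), Or.inl h⟩
  obtain ⟨v₀, hv₀T, hv₀⟩ := h0
  obtain ⟨v₁, hv₁T, hv₁⟩ := h1
  have hreach : ∀ u : T, ((combGraph r m).induce T).Reachable u ⟨v₀, hv₀T⟩ := by
    intro u
    by_cases hu : u.1.1 = 0
    · exact (hadj u ⟨v₁, hv₁T⟩ (by rw [hu, hv₁]; decide)).reachable.trans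
        (hadj ⟨v₁, hv₁T⟩ ⟨v₀, hv₀T⟩ (by rw [hv₀, hv₁]; decide)).reachable
    · exact (hadj u ⟨v₀, hv₀T⟩ (by rwa [hv₀])).reachable
  exact fun u w => (hreach u).trans (hreach w).symm

lemma IsCBSep.combGraph_two_mul_le_three_mul_card {r m : ℕ}
    {S : Finset (Finset (Fin 2 × Fin r × Fin m))} (hS : IsCBSep (combGraph r m) S) :
    2 * (r * m) ≤ 3 * #(S.biUnion id) := by
  set B := S.biUnion id
  have hcardV : Fintype.card (Fin 2 × Fin r × Fin m) = 2 * (r * m) := by simp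
  by_cases hboth : ∀ a : Fin 2, ∃ v ∉ B, v.1 = a
  · have hU : {v | ∀ C ∈ S, v ∉ C} = ((Bᶜ : Finset _) : Set (Fin 2 × Fin r × Fin m)) := by
      ext v
      simp [B]
    have hconn : ((combGraph r m).induce {v | ∀ C ∈ S, v ∉ C}).Preconnected := by
      rw [hU]
      exact combGraph_induce_preconnected (by simpa using hboth 0) (by simpa using hboth 1)
    have huncovered := hS.three_mul_ncard_le_of_preconnected hconn
    rw [hU, Set.ncard_coe_finset, card_compl, hcardV] at huncovered
    have hB := hcardV ▸ B.card_le_univ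
    omega
  · push Not at hboth
    obtain ⟨a, hcovered⟩ := hboth
    have hside := card_le_card_of_injOn (s := univ) (t := B) (a, ·)
      (fun p _ => by by_contra hp; exact hcovered _ hp rfl) (Prod.mk_right_injective a).injOn
    rw [card_univ, Fintype.card_prod, Fintype.card_fin, Fintype.card_fin] at hside
    omega

theorem comb_graph_separator_lower_bound_general
    (r m : ℕ) (hm : 1 ≤ m)
    (S : Finset (Finset (Fin 2 × Fin r × Fin m)))
    (hS : IsCBSep (combGraph r m) S) :
    (r : ℝ) / 3 * Real.logb 2 ((m : ℝ) + 1) ≤ sepWeight S := by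
  have hK : (0 : ℝ) < 2 * m := by positivity
  have hcover : 2 * ((r : ℝ) * m) ≤ 3 * #(S.biUnion id) := by
    exact_mod_cast hS.combGraph_two_mul_le_three_mul_card
  have hweight := card_biUnion_div_mul_logb_le_sepWeight hS.2.1 hK fun C hC => by
    exact_mod_cast combGraph_isClique_card_le (hS.1 C hC)
  calc (r : ℝ) / 3 * Real.logb 2 ((m : ℝ) + 1)
      ≤ r / 3 * Real.logb 2 (2 * m + 1) := by gcongr <;> linarith
    _ ≤ #(S.biUnion id) / (2 * m) * Real.logb 2 (2 * m + 1) := by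
      refine mul_le_mul_of_nonneg_right ?_ (Real.logb_nonneg one_lt_two (by linarith))
      rw [div_le_div_iff₀ three_pos hK]
      linarith
    _ ≤ sepWeight S := hweight

/-- Every clique-based separator with balance 2/3 of the comb graph
`G_{r,m}` has weight at least `(r/3) · log₂(m+1)`. -/
theorem comb_graph_separator_lower_bound
    (r m : ℕ) (hr : 1 ≤ r) (hm : 1 ≤ m)
    (S : Finset (Finset (Fin 2 × Fin r × Fin m)))
    (hS : IsCBSep (combGraph r m) S) :
    (r : ℝ) / 3 * Real.logb 2 ((m : ℝ) + 1) ≤ sepWeight S :=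
  comb_graph_separator_lower_bound_general r m hm S hS
end

section
/- There is a universal constant c > 0 such that for every integer k ≥ 2 the following holds. Let G_k be the k×k grid graph, i.e., the simple graph on {1,…,k} × {1,…,k} in which two vertices are adjacent if and only if they are at L1-distance exactly 1. Then every clique-based separator of G_k with balance 2/3 has weight at least c·k. -/
open scoped BigOperators ENNReal

/-!
A clique of the grid has at most two vertices, since the grid is bipartite, and a clique with
`n ≤ 2` vertices has weight `log₂(n + 1) ≥ n / 2`; so it suffices to show that a balanced
separator covers at least `k / 3` vertices. If it misses a whole column, that column together
with every row it misses lies in one component, so it misses at most `2k/3` rows and hence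
meets at least `k/3` rows. Otherwise it meets all `k` columns.
-/

open SimpleGraph

def gridGraph.parityColoring (k : ℕ) : (gridGraph k).Coloring (Fin 2) :=
  Coloring.mk (fun v => ⟨((v.1 : ℕ) + v.2) % 2, Nat.mod_lt _ two_pos⟩) fun {v w} h => by
    have h' : Nat.dist v.1 w.1 + Nat.dist v.2 w.2 = 1 := h
    simp only [Nat.dist, ne_eq, Fin.mk.injEq] at h' ⊢
    omega

theorem gridGraph.card_le_two_of_isClique {k : ℕ} {C : Finset (Fin k × Fin k)}
    (h : (gridGraph k).IsClique (C : Set (Fin k × Fin k))) : C.card ≤ 2 := by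
  simpa using h.card_le_of_coloring (gridGraph.parityColoring k)

theorem gridGraph.induce_reachable_row {k : ℕ} {s : Set (Fin k × Fin k)} {i : Fin k}
    (hrow : ∀ j, (i, j) ∈ s) (j j' : Fin k) :
    ((gridGraph k).induce s).Reachable ⟨(i, j), hrow j⟩ ⟨(i, j'), hrow j'⟩ :=
  let φ : pathGraph k →g (gridGraph k).induce s :=
    { toFun := fun j => ⟨(i, j), hrow j⟩
      map_rel' := fun {a b} hab => by
        have := pathGraph_adj.1 hab
        change Nat.dist i i + Nat.dist a b = 1
        simp only [Nat.dist]
        omega }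
  (pathGraph_preconnected k j j').map φ

theorem gridGraph.induce_reachable_col {k : ℕ} {s : Set (Fin k × Fin k)} {j : Fin k}
    (hcol : ∀ i, (i, j) ∈ s) (i i' : Fin k) :
    ((gridGraph k).induce s).Reachable ⟨(i, j), hcol i⟩ ⟨(i', j), hcol i'⟩ :=
  let φ : pathGraph k →g (gridGraph k).induce s :=
    { toFun := fun i => ⟨(i, j), hcol i⟩
      map_rel' := fun {a b} hab => by
        have := pathGraph_adj.1 hab
        change Nat.dist a b + Nat.dist j j = 1
        simp only [Nat.dist]
        omega }
  (pathGraph_preconnected k i i').map φ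

open Classical in
noncomputable def gridGraph.fullRows {k : ℕ} (s : Set (Fin k × Fin k)) : Finset (Fin k) :=
  {i | ∀ j, (i, j) ∈ s}

theorem gridGraph.card_fullRows_mul_le_ncard_supp {k : ℕ} {s : Set (Fin k × Fin k)} {b : Fin k}
    (hcol : ∀ i, (i, b) ∈ s) :
    (fullRows s).card * k ≤
      (((gridGraph k).induce s).connectedComponentMk ⟨(b, b), hcol b⟩).supp.ncard := by
  set c := ((gridGraph k).induce s).connectedComponentMk ⟨(b, b), hcol b⟩
  have hsub : ((fullRows s ×ˢ Finset.univ : Finset (Fin k × Fin k)) : Set (Fin k × Fin k)) ⊆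
      Subtype.val '' c.supp := by
    rintro ⟨i, j⟩ hij
    have hrow : ∀ j, (i, j) ∈ s := by simpa [fullRows] using hij
    refine ⟨⟨(i, j), hrow j⟩, ?_, rfl⟩
    rw [ConnectedComponent.mem_supp_iff, ConnectedComponent.eq]
    exact (induce_reachable_row hrow j b).trans (induce_reachable_col hcol i b)
  calc (fullRows s).card * k = (fullRows s ×ˢ Finset.univ : Finset (Fin k × Fin k)).card := by
        simp
    _ ≤ (Subtype.val '' c.supp).ncard := by
        rw [← Set.ncard_coe_finset]
        exact Set.ncard_le_ncard hsub (Set.toFinite _)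
    _ = c.supp.ncard := Set.ncard_image_of_injective _ Subtype.val_injective

theorem gridGraph.le_three_mul_card_of_components_le {k : ℕ} (X : Finset (Fin k × Fin k))
    (s : Set (Fin k × Fin k)) (hs : (X : Set (Fin k × Fin k))ᶜ ⊆ s)
    (hbal : ∀ c : ((gridGraph k).induce s).ConnectedComponent, 3 * c.supp.ncard ≤ 2 * (k * k)) :
    k ≤ 3 * X.card := by
  by_cases hcols : ∀ j, ∃ i, (i, j) ∈ X
  · have := Finset.card_le_card_of_surjOn Prod.snd (t := Finset.univ) fun j _ => by
      obtain ⟨i, hi⟩ := hcols j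
      exact ⟨(i, j), hi, rfl⟩
    simp only [Finset.card_univ, Fintype.card_fin] at this
    omega
  push Not at hcols
  obtain ⟨b, hb⟩ := hcols
  have hcol : ∀ i, (i, b) ∈ s := fun i => hs (hb i)
  have hk : 0 < k := b.pos
  have hfull : 3 * (fullRows s).card ≤ 2 * k := by
    refine Nat.le_of_mul_le_mul_right ?_ hk
    calc 3 * (fullRows s).card * k = 3 * ((fullRows s).card * k) := by ring
      _ ≤ 3 * (((gridGraph k).induce s).connectedComponentMk ⟨(b, b), hcol b⟩).supp.ncard :=
        Nat.mul_le_mul_left 3 (card_fullRows_mul_le_ncard_supp hcol)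
      _ ≤ 2 * k * k := by rw [mul_assoc]; exact hbal _
  have hmet : (Finset.univ \ fullRows s).card ≤ X.card :=
    Finset.card_le_card_of_surjOn Prod.fst fun i hi => by
      obtain ⟨j, hj⟩ : ∃ j, (i, j) ∉ s := by simpa [fullRows] using hi
      exact ⟨(i, j), by_contra fun h => hj (hs h), rfl⟩
  rw [Finset.card_sdiff_of_subset (Finset.subset_univ _), Finset.card_univ,
    Fintype.card_fin] at hmet
  omega

theorem half_le_logb_two_add_one {n : ℕ} (hn : n ≤ 2) : (n : ℝ) / 2 ≤ Real.logb 2 (n + 1) := by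
  rcases Nat.eq_zero_or_pos n with rfl | hpos
  · simp
  calc (n : ℝ) / 2 ≤ 1 := by
        rw [div_le_one two_pos]; exact_mod_cast hn
    _ = Real.logb 2 2 := (Real.logb_self_eq_one one_lt_two).symm
    _ ≤ Real.logb 2 (n + 1) := by
        gcongr
        · norm_num
        · norm_cast; omega

theorem half_card_biUnion_le_sepWeight {V : Type*} [DecidableEq V] {S : Finset (Finset V)}
    (hS : ∀ C ∈ S, C.card ≤ 2) : ((S.biUnion id).card : ℝ) / 2 ≤ sepWeight S :=
  calc ((S.biUnion id).card : ℝ) / 2 ≤ ∑ C ∈ S, (C.card : ℝ) / 2 := by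
        rw [← Finset.sum_div]
        gcongr
        exact_mod_cast Finset.card_biUnion_le
    _ ≤ sepWeight S := Finset.sum_le_sum fun C hC => half_le_logb_two_add_one (hS C hC)

/-- Every clique-based separator with balance 2/3 of the `k × k` grid graph
has weight at least `c·k`, for a universal constant `c > 0`. -/
theorem grid_graph_separator_lower_bound :
    ∃ c : ℝ, 0 < c ∧ ∀ k : ℕ, 2 ≤ k →
      ∀ S : Finset (Finset (Fin k × Fin k)),
        IsCBSep (gridGraph k) S → c * (k : ℝ) ≤ sepWeight S := by
  classical
  refine ⟨1 / 6, by norm_num, fun k _ S ⟨hclique, _, hbal⟩ => ?_⟩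
  have hcover : k ≤ 3 * (S.biUnion id).card := by
    refine gridGraph.le_three_mul_card_of_components_le _ _ ?_ fun c => by simpa using hbal c
    intro v hv C hC hvC
    exact hv (Finset.mem_biUnion.2 ⟨C, hC, hvC⟩)
  have hweight := half_card_biUnion_le_sepWeight fun C hC =>
    gridGraph.card_le_two_of_isClique (hclique C hC)
  have : (k : ℝ) ≤ 3 * (S.biUnion id).card := by exact_mod_cast hcover
  linarith
end

section
/- For every integer m ≥ 1 and all nonnegative real numbers n_1, …, n_m satisfying n_1 + ⋯ + n_m ≤ 2m², one has ∑_{j=1}^{m} ln(n_j/j + 1) ≤ 3m. -/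
open scoped BigOperators ENNReal

/-!
Bound each term by the tangent line of `log` at `3m/j`, i.e. `log x ≤ log t + x / t - 1`.
The linear parts then sum to at most `(2m² + m²) / (3m) - m = 0`, and what remains is
`∑ log (3m/j) = m log (3m) - log m! ≤ m log 3 + m`, using `m^m / m! ≤ e^m`; finally `log 3 ≤ 2`.
-/

open Real Finset
open scoped Nat

namespace Real

lemma log_le_log_add_div_sub_one {x t : ℝ} (hx : 0 < x) (ht : 0 < t) :
    log x ≤ log t + x / t - 1 := by
  have h := log_le_sub_one_of_pos (div_pos hx ht)
  rw [log_div hx.ne' ht.ne'] at h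
  linarith

lemma natCast_mul_log_sub_le_log_factorial (n : ℕ) : n * log n - n ≤ log n ! := by
  obtain rfl | hn := n.eq_zero_or_pos
  · simp
  have h := log_le_log (by positivity) (pow_div_factorial_le_exp _ (Nat.cast_nonneg n) n)
  rw [log_exp, log_div (by positivity) (by positivity), log_pow] at h
  linarith

end Real

lemma sum_Icc_log_natCast (n : ℕ) : ∑ j ∈ Icc 1 n, log j = log n ! := by
  rw [← Ico_add_one_right_eq_Icc, ← log_prod fun j hj =>
      Nat.cast_ne_zero.2 (Nat.one_le_iff_ne_zero.1 (mem_Ico.1 hj).1),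
    ← Nat.cast_prod, prod_Ico_id_eq_factorial]

lemma sum_Icc_natCast_le_sq (n : ℕ) : ∑ j ∈ Icc 1 n, (j : ℝ) ≤ n ^ 2 := by
  calc ∑ j ∈ Icc 1 n, (j : ℝ) ≤ #(Icc 1 n) • (n : ℝ) :=
        sum_le_card_nsmul _ _ _ fun j hj => Nat.cast_le.2 (mem_Icc.1 hj).2
    _ = n ^ 2 := by simp [sq]

lemma sum_log_div_add_one_le {ι : Type*} (s : Finset ι) {a w : ι → ℝ}
    (ha : ∀ i ∈ s, 0 ≤ a i) (hw : ∀ i ∈ s, 0 < w i) {c : ℝ} (hc : 0 < c) :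
    ∑ i ∈ s, log (a i / w i + 1) ≤
      ∑ i ∈ s, log (c / w i) + (∑ i ∈ s, a i + ∑ i ∈ s, w i) / c - #s := by
  have hterm : ∀ i ∈ s, log (a i / w i + 1) ≤ log (c / w i) + (a i + w i) / c - 1 := by
    intro i hi
    have hwi := hw i hi
    have hai := ha i hi
    have h := log_le_log_add_div_sub_one (by positivity : 0 < a i / w i + 1) (div_pos hc hwi)
    rwa [show (a i / w i + 1) / (c / w i) = (a i + w i) / c by field_simp] at h
  calc _ ≤ ∑ i ∈ s, (log (c / w i) + (a i + w i) / c - 1) := sum_le_sum hterm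
    _ = _ := by
      rw [sum_sub_distrib, sum_add_distrib, ← sum_div, sum_add_distrib]
      simp

/-- If `n₁ + ⋯ + n_m ≤ 2m²` with all `n_j ≥ 0`, then
`∑_{j=1}^m ln(n_j/j + 1) ≤ 3m`. -/
theorem sum_log_chord_weight_bound
    (m : ℕ) (hm : 1 ≤ m) (a : ℕ → ℝ)
    (ha : ∀ j ∈ Finset.Icc 1 m, 0 ≤ a j)
    (hsum : ∑ j ∈ Finset.Icc 1 m, a j ≤ 2 * (m : ℝ) ^ 2) :
    ∑ j ∈ Finset.Icc 1 m, Real.log (a j / (j : ℝ) + 1) ≤ 3 * (m : ℝ) := by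
  have hm0 : (0 : ℝ) < m := by exact_mod_cast hm
  have hj_pos : ∀ j ∈ Icc 1 m, (0 : ℝ) < j := fun j hj => Nat.cast_pos.2 (mem_Icc.1 hj).1
  have htangent := sum_log_div_add_one_le _ ha hj_pos (by positivity : (0 : ℝ) < 3 * m)
  have hlogs : ∑ j ∈ Icc 1 m, log (3 * m / j) = m * log 3 + m * log m - log m ! := by
    rw [← sum_Icc_log_natCast, sum_congr rfl fun j hj => log_div (by positivity) (hj_pos j hj).ne',
      sum_sub_distrib, sum_const, log_mul (by norm_num) hm0.ne']
    simp only [Nat.card_Icc, add_tsub_cancel_right, nsmul_eq_mul]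
    ring
  have hratio : (∑ j ∈ Icc 1 m, a j + ∑ j ∈ Icc 1 m, (j : ℝ)) / (3 * m) ≤ m := by
    rw [div_le_iff₀ (by positivity)]
    nlinarith [sum_Icc_natCast_le_sq m]
  have hlog3 : m * log 3 ≤ m * 2 :=
    mul_le_mul_of_nonneg_left (by linarith [log_le_sub_one_of_pos (by norm_num : (0 : ℝ) < 3)])
      hm0.le
  have hfactorial := natCast_mul_log_sub_le_log_factorial m
  simp only [Nat.card_Icc, add_tsub_cancel_right] at htangent
  linarith
end

section
/- Let P be a polygonal region (possibly with holes) and let p, q, z₁, z₂ ∈ P be four points all contained in some closed axis-parallel square of side length 1, such that the closed segments pz₁, qz₂ and z₁z₂ are contained in P, |p − z₁| ≤ 1/2, |q − z₂| ≤ 1/2, but the closed segment pq is not contained in P. Then there exist reflex vertices v and v' of P (possibly equal), both lying in the convex hull of {p, q, z₁, z₂}, such that the closed segment pv is contained in P and the closed segment qv' is contained in P; in particular |p − v| ≤ √2 and |q − v'| ≤ √2. -/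
open scoped BigOperators ENNReal

/-!
Let `H` be the convex hull of the four points. If `p` saw no reflex vertex of `P` in `H`, then
`P ∩ H` would be convex near every point that `p` sees in it. Such local convexity makes
visibility transitive: if `a` sees `b` and `b` sees `c` in a closed set `Q` which is convex near
every point `a` sees, then `a` sees `c`. Move `w` from `b` to `c`; the times at which `a` sees `w`
form a closed set, and past such a time `t` a thin triangle between `a`, `w t` and points slightly
further along is zipped together from convex pieces, using a convexity radius that is uniform
along the compact segment from `a` to `w t`. Along the path `p, z₁, z₂, q` this contradicts the
fact that `p` does not see `q`, and symmetrically for `q`. The bound `√2` is the diameter of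
the unit square containing `H`.
-/

open Set Metric AffineMap

section Segments

variable {E : Type*} [AddCommGroup E] [Module ℝ E]

theorem exists_nat_mem_Icc_div {N : ℕ} (hN : 0 < N) {u : ℝ} (hu : u ∈ Icc (0 : ℝ) 1) :
    ∃ k < N, u ∈ Icc ((k : ℝ) / N) (((k : ℝ) + 1) / N) := by
  have hN' : (0 : ℝ) < N := by exact_mod_cast hN
  simp only [mem_Icc, div_le_iff₀ hN', le_div_iff₀ hN']
  rcases hu.2.lt_or_eq with hu1 | rfl
  · refine ⟨⌊u * N⌋₊, ?_, Nat.floor_le (by nlinarith [hu.1]), (Nat.lt_floor_add_one _).le⟩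
    exact (Nat.floor_lt (by nlinarith [hu.1])).2 (by nlinarith)
  · refine ⟨N - 1, by omega, ?_⟩
    rw [Nat.cast_sub (by omega), Nat.cast_one]
    constructor <;> linarith

theorem segment_subset_of_forall_segment_lineMap_subset {s : Set E} {x y : E} {N : ℕ}
    (hN : 0 < N)
    (h : ∀ k < N, segment ℝ (lineMap x y ((k : ℝ) / N)) (lineMap x y (((k : ℝ) + 1) / N)) ⊆ s) :
    segment ℝ x y ⊆ s := by
  rw [segment_eq_image_lineMap]
  rintro _ ⟨u, hu, rfl⟩
  obtain ⟨k, hk, huk⟩ := exists_nat_mem_Icc_div hN hu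
  apply h k hk
  rw [← image_segment, segment_eq_Icc (by gcongr; linarith)]
  exact mem_image_of_mem _ huk

end Segments

section Zipper

theorem mk_mem_closedBall_mk_zero_iff {a b c ε : ℝ} :
    (a, b) ∈ closedBall (c, (0 : ℝ)) ε ↔ |a - c| ≤ ε ∧ |b| ≤ ε := by
  simp [← closedBall_prod_same, Real.dist_eq]

/- Each apex `(k / N, h / 2 ^ k)` is the midpoint of the previous apex and the base point
`((k + 1) / N, 0)`, both in the ball around `(k / N, 0)`. Under each apex `S` contains the vertical
segment, which meets the target segment; consecutive such points share a ball. -/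
theorem segment_mk_subset_of_convex_inter_closedBall {S : Set (ℝ × ℝ)} {ε h : ℝ} {N : ℕ}
    (hN : 0 < N) (hNε : 1 / (N : ℝ) ≤ ε) (hh : 0 ≤ h) (hhε : h ≤ ε)
    (hbase : ∀ s ∈ Icc (0 : ℝ) 1, (s, (0 : ℝ)) ∈ S) (hside : ∀ t ∈ Icc 0 h, ((0 : ℝ), t) ∈ S)
    (hconv : ∀ s ∈ Icc (0 : ℝ) 1, Convex ℝ (S ∩ closedBall (s, 0) ε)) :
    segment ℝ ((0 : ℝ), h / 2 ^ N) (1, 0) ⊆ S := by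
  have hN' : (0 : ℝ) < N := by exact_mod_cast hN
  have hε : 0 ≤ ε := (by positivity : (0 : ℝ) ≤ 1 / N).trans hNε
  have hgrid : ∀ k ≤ N, (k : ℝ) / N ∈ Icc (0 : ℝ) 1 := fun k hk =>
    ⟨by positivity, div_le_one_of_le₀ (by exact_mod_cast hk) hN'.le⟩
  have hgap : ∀ x : ℝ, |(x + 1) / N - x / N| ≤ ε := fun x => by
    rwa [show (x + 1) / N - x / N = 1 / N by ring, abs_of_pos (by positivity)]
  have hheight : ∀ k : ℕ, h / 2 ^ k ≤ ε := fun k =>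
    (div_le_self hh (one_le_pow₀ one_le_two)).trans hhε
  have apex : ∀ k < N, ((k : ℝ) / N, h / 2 ^ k) ∈ S := by
    intro k
    induction k with
    | zero => intro _; simpa using hside h ⟨hh, le_rfl⟩
    | succ k ih =>
      intro hk
      have hA : ((k : ℝ) / N, h / 2 ^ k) ∈ S ∩ closedBall (((k + 1 : ℕ) : ℝ) / N, 0) ε := by
        refine ⟨ih (by omega), mk_mem_closedBall_mk_zero_iff.2 ⟨?_, ?_⟩⟩
        · rw [abs_sub_comm]; push_cast; exact hgap k
        · rw [abs_of_nonneg (by positivity)]; exact hheight k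
      have hB : (((k + 2 : ℕ) : ℝ) / N, (0 : ℝ)) ∈
          S ∩ closedBall (((k + 1 : ℕ) : ℝ) / N, 0) ε := by
        refine ⟨hbase _ (hgrid _ hk), mk_mem_closedBall_mk_zero_iff.2 ⟨?_, by simpa using hε⟩⟩
        push_cast; rw [show (k : ℝ) + 2 = (k + 1 : ℝ) + 1 by ring]; exact hgap _
      convert (hconv _ (hgrid _ hk.le) hA hB (by norm_num : (0 : ℝ) ≤ 1 / 2)
        (by norm_num : (0 : ℝ) ≤ 1 / 2) (by norm_num)).1 using 1
      ext <;> simp <;> field_simp <;> ring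
  have vertical : ∀ k < N, ∀ β ∈ Icc 0 (h / 2 ^ k), ((k : ℝ) / N, β) ∈ S := by
    intro k hk β hβ
    have hB : ((k : ℝ) / N, (0 : ℝ)) ∈ S ∩ closedBall ((k : ℝ) / N, 0) ε :=
      ⟨hbase _ (hgrid k hk.le),
        mk_mem_closedBall_mk_zero_iff.2 ⟨by simpa using hε, by simpa using hε⟩⟩
    have hA : ((k : ℝ) / N, h / 2 ^ k) ∈ S ∩ closedBall ((k : ℝ) / N, 0) ε := by
      refine ⟨apex k hk, mk_mem_closedBall_mk_zero_iff.2 ⟨by simpa using hε, ?_⟩⟩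
      rw [abs_of_nonneg (by positivity)]; exact hheight k
    refine ((hconv _ (hgrid k hk.le)).segment_subset hB hA).trans inter_subset_left ?_
    rw [← Prod.image_mk_segment_right, segment_eq_Icc (by positivity)]
    exact mem_image_of_mem _ hβ
  set σ := h / 2 ^ N
  have hσ : ∀ r ∈ Icc (0 : ℝ) 1, σ * (1 - r) ∈ Icc 0 σ := fun r hr =>
    ⟨mul_nonneg (by positivity) (by linarith [hr.2]),
      mul_le_of_le_one_right (by positivity) (by linarith [hr.1])⟩
  have target : ∀ k ≤ N, ((k : ℝ) / N, σ * (1 - k / N)) ∈ S := by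
    intro k hk
    rcases hk.lt_or_eq with hk | rfl
    · refine vertical k hk _ ⟨(hσ _ (hgrid k hk.le)).1, (hσ _ (hgrid k hk.le)).2.trans ?_⟩
      exact div_le_div_of_nonneg_left hh (by positivity) (pow_le_pow_right₀ one_le_two hk.le)
    · simpa [hN'.ne'] using hbase 1 ⟨zero_le_one, le_rfl⟩
  have hline : ∀ r : ℝ, lineMap ((0 : ℝ), σ) ((1 : ℝ), (0 : ℝ)) r = (r, σ * (1 - r)) := by
    intro r; ext <;> simp [lineMap_apply]; ring
  refine segment_subset_of_forall_segment_lineMap_subset hN fun k hk => ?_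
  rw [hline, hline]
  have hbox : ∀ r ∈ Icc (0 : ℝ) 1, |σ * (1 - r)| ≤ ε := fun r hr => by
    rw [abs_of_nonneg (hσ r hr).1]; exact (hσ r hr).2.trans (hheight N)
  have hk1 : ((k : ℝ) + 1) / N ∈ Icc (0 : ℝ) 1 := by exact_mod_cast hgrid (k + 1) hk
  refine ((hconv _ (hgrid k hk.le)).segment_subset ⟨target k hk.le, ?_⟩ ⟨?_, ?_⟩).trans
    inter_subset_left
  · exact mk_mem_closedBall_mk_zero_iff.2 ⟨by simpa using hε, hbox _ (hgrid k hk.le)⟩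
  · exact_mod_cast target (k + 1) hk
  · exact mk_mem_closedBall_mk_zero_iff.2 ⟨hgap _, hbox _ hk1⟩

theorem exists_segment_mk_subset_of_convex_inter_closedBall {S : Set (ℝ × ℝ)} {ε h : ℝ}
    (hε : 0 < ε) (hh : 0 < h)
    (hbase : ∀ s ∈ Icc (0 : ℝ) 1, (s, (0 : ℝ)) ∈ S) (hside : ∀ t ∈ Icc 0 h, ((0 : ℝ), t) ∈ S)
    (hconv : ∀ s ∈ Icc (0 : ℝ) 1, Convex ℝ (S ∩ closedBall (s, 0) ε)) :
    ∃ σ ∈ Ioc 0 h, segment ℝ ((0 : ℝ), σ) (1, 0) ⊆ S := by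
  obtain ⟨N, hN⟩ := exists_nat_one_div_lt hε
  have hh' : 0 < min h ε := lt_min hh hε
  refine ⟨min h ε / 2 ^ (N + 1), ⟨by positivity, ?_⟩, ?_⟩
  · exact (div_le_self hh'.le (one_le_pow₀ one_le_two)).trans (min_le_left _ _)
  exact segment_mk_subset_of_convex_inter_closedBall N.succ_pos (by exact_mod_cast hN.le) hh'.le
    (min_le_right _ _) hbase (fun t ht => hside t ⟨ht.1, ht.2.trans (min_le_left _ _)⟩) hconv

end Zipper

section LocalConvexity

variable {E : Type*} [SeminormedAddCommGroup E] [NormedSpace ℝ E]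

def LocallyConvexAt (Q : Set E) (x : E) : Prop :=
  ∃ ρ > 0, Convex ℝ (Q ∩ closedBall x ρ)

theorem LocallyConvexAt.inter {P H : Set E} {x : E} (h : LocallyConvexAt P x)
    (hH : Convex ℝ H) : LocallyConvexAt (P ∩ H) x := by
  obtain ⟨ρ, hρ, hconv⟩ := h
  exact ⟨ρ, hρ, by rw [inter_right_comm]; exact hconv.inter hH⟩

theorem IsCompact.exists_forall_convex_inter_closedBall {Q K : Set E} (hK : IsCompact K)
    (hQ : ∀ x ∈ K, LocallyConvexAt Q x) :
    ∃ ε > 0, ∀ x ∈ K, Convex ℝ (Q ∩ closedBall x ε) := by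
  choose! ρ hρ hconv using hQ
  obtain ⟨δ, hδ, hcover⟩ := lebesgue_number_lemma_of_metric hK
    (c := fun y : K => ball (y : E) (ρ y)) (fun _ => isOpen_ball)
    (fun x hx => mem_iUnion.2 ⟨⟨x, hx⟩, mem_ball_self (hρ x hx)⟩)
  refine ⟨δ / 2, half_pos hδ, fun x hx => ?_⟩
  obtain ⟨⟨y, hy⟩, hxy⟩ := hcover x hx
  have hsub : closedBall x (δ / 2) ⊆ closedBall y (ρ y) :=
    (closedBall_subset_ball (half_lt_self hδ)).trans (hxy.trans ball_subset_closedBall)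
  rw [← inter_eq_right.2 hsub, ← inter_assoc]
  exact (hconv y hy).inter (convex_closedBall x _)

theorem exists_segment_subset_of_convex_inter_closedBall {Q : Set E} {m U V : E} {ε h : ℝ}
    (hε : 0 < ε) (hh : 0 < h)
    (hbase : ∀ s ∈ Icc (0 : ℝ) 1, m + s • U ∈ Q) (hside : ∀ t ∈ Icc 0 h, m + t • V ∈ Q)
    (hconv : ∀ s ∈ Icc (0 : ℝ) 1, Convex ℝ (Q ∩ closedBall (m + s • U) ε)) :
    ∃ σ ∈ Ioc 0 h, segment ℝ (m + σ • V) (m + U) ⊆ Q := by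
  let g : ℝ × ℝ →L[ℝ] E :=
    (ContinuousLinearMap.fst ℝ ℝ ℝ).smulRight U + (ContinuousLinearMap.snd ℝ ℝ ℝ).smulRight V
  let f : ℝ × ℝ →ᵃ[ℝ] E := g.toLinearMap.toAffineMap + AffineMap.const ℝ (ℝ × ℝ) m
  have hf : ∀ z : ℝ × ℝ, f z = m + z.1 • U + z.2 • V := fun z => by
    simp [f, g]; abel
  have hlip : ∀ z w, dist (f z) (f w) ≤ (‖g‖ + 1) * dist z w := fun z w => by
    rw [dist_eq_norm, dist_eq_norm, hf, hf, show m + z.1 • U + z.2 • V - (m + w.1 • U + w.2 • V)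
      = g (z - w) by simp [g, sub_smul]; abel]
    exact (g.le_opNorm _).trans (by gcongr; linarith)
  have hconv' : ∀ s ∈ Icc (0 : ℝ) 1, Convex ℝ (f ⁻¹' Q ∩ closedBall (s, 0) (ε / (‖g‖ + 1))) := by
    intro s hs
    have hsub : f ⁻¹' Q ∩ closedBall (s, 0) (ε / (‖g‖ + 1)) =
        f ⁻¹' (Q ∩ closedBall (m + s • U) ε) ∩ closedBall (s, 0) (ε / (‖g‖ + 1)) := by
      ext z
      simp only [mem_inter_iff, mem_preimage, mem_closedBall, and_congr_left_iff]
      refine fun hz => ⟨fun hzQ => ⟨hzQ, ?_⟩, And.left⟩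
      calc dist (f z) (m + s • U) = dist (f z) (f (s, 0)) := by simp [hf]
        _ ≤ (‖g‖ + 1) * dist z (s, 0) := hlip _ _
        _ ≤ (‖g‖ + 1) * (ε / (‖g‖ + 1)) := by gcongr
        _ = ε := by field_simp
    rw [hsub]
    exact ((hconv s hs).affine_preimage f).inter (convex_closedBall _ _)
  obtain ⟨σ, hσ, hseg⟩ := exists_segment_mk_subset_of_convex_inter_closedBall (by positivity) hh
    (fun s hs => by simpa [hf] using hbase s hs) (fun t ht => by simpa [hf] using hside t ht)
    hconv'
  refine ⟨σ, hσ, ?_⟩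
  have himage := image_segment ℝ f ((0 : ℝ), σ) (1, 0)
  rw [hf, hf] at himage
  simp only [zero_smul, one_smul, add_zero] at himage
  rw [← himage]
  exact image_subset_iff.2 hseg

theorem segment_subset_of_locallyConvexAt {Q : Set E} {a b c : E} (hQ : IsClosed Q)
    (hab : segment ℝ a b ⊆ Q) (hbc : segment ℝ b c ⊆ Q)
    (hloc : ∀ x, segment ℝ a x ⊆ Q → LocallyConvexAt Q x) :
    segment ℝ a c ⊆ Q := by
  have hmem : ∀ {x y : E}, ∀ s ∈ Icc (0 : ℝ) 1, x + s • (y - x) ∈ segment ℝ x y :=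
    fun s hs => by rw [segment_eq_image']; exact mem_image_of_mem _ hs
  let T : Set ℝ := {t | segment ℝ a (b + t • (c - b)) ⊆ Q}
  have hTclosed : IsClosed T := by
    have : T = ⋂ u ∈ Icc (0 : ℝ) 1, {t | a + u • (b + t • (c - b) - a) ∈ Q} := by
      ext t
      simp only [T, segment_eq_image', image_subset_iff, mem_iInter]
      rfl
    rw [this]
    exact isClosed_biInter fun u _ => hQ.preimage (by fun_prop)
  suffices Icc (0 : ℝ) 1 ⊆ T by simpa [T] using this ⟨zero_le_one, le_rfl⟩
  refine (hTclosed.inter isClosed_Icc).Icc_subset_of_forall_exists_gt (by simpa [T] using hab) ?_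
  rintro t ⟨ht, ht0, ht1⟩ y hy
  set m := b + t • (c - b)
  obtain ⟨ε, hε, hconv⟩ := (segment_eq_image_lineMap ℝ a m ▸ isCompact_Icc.image
    lineMap_continuous).exists_forall_convex_inter_closedBall fun x hx =>
      hloc x (((convex_segment a m).segment_subset (left_mem_segment ℝ a m) hx).trans ht)
  have hma : segment ℝ m a ⊆ Q := segment_symm ℝ a m ▸ ht
  obtain ⟨σ, ⟨hσ0, hσ⟩, hseg⟩ := exists_segment_subset_of_convex_inter_closedBall
    (U := a - m) (V := c - b) hε (lt_min (sub_pos.2 ht1) (sub_pos.2 hy))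
    (fun s hs => hma (hmem s hs))
    (fun τ hτ => by
      convert hbc (hmem (t + τ)
        ⟨by linarith [hτ.1], by linarith [hτ.2, min_le_left (1 - t) (y - t)]⟩) using 1
      module)
    (fun s hs => hconv _ (segment_symm ℝ a m ▸ hmem s hs))
  refine ⟨t + σ, ?_, by linarith, by linarith [min_le_right (1 - t) (y - t)]⟩
  simpa [T, segment_symm, add_smul, add_assoc, m] using hseg

end LocalConvexity

section ReflexVertices

theorem locallyConvexAt_of_not_isReflexVertex {P : Set Plane} {x : Plane} (hP : IsClosed P)
    (hx : x ∈ P) (h : ¬ IsReflexVertex P x) : LocallyConvexAt P x := by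
  by_cases hint : x ∈ interior P
  · obtain ⟨ρ, hρ, hball⟩ := Metric.mem_nhds_iff.1 (mem_interior_iff_mem_nhds.1 hint)
    refine ⟨ρ / 2, half_pos hρ, ?_⟩
    rw [inter_eq_right.2 ((closedBall_subset_ball (half_lt_self hρ)).trans hball)]
    exact convex_closedBall x _
  · simp only [IsReflexVertex, hP.frontier_eq, mem_sdiff, hx, hint, not_false_eq_true, and_self,
      true_and, not_exists, not_and, not_forall, not_not] at h
    obtain ⟨ρ, hρ, -, hconv⟩ := h 1 one_pos
    exact ⟨ρ, hρ, hconv⟩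

theorem exists_isReflexVertex_of_not_segment_subset {P : Set Plane} {a b c : Plane}
    (hP : IsClosed P) (hab : segment ℝ a b ⊆ P) (hbc : segment ℝ b c ⊆ P)
    (hac : ¬ segment ℝ a c ⊆ P) :
    ∃ v ∈ convexHull ℝ {a, b, c}, IsReflexVertex P v ∧ segment ℝ a v ⊆ P := by
  set H := convexHull ℝ ({a, b, c} : Set Plane)
  have hH : Convex ℝ H := convex_convexHull ℝ _
  have hsegH : ∀ {x y}, x ∈ ({a, b, c} : Set Plane) → y ∈ ({a, b, c} : Set Plane) →
      segment ℝ x y ⊆ H := fun hx hy =>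
    hH.segment_subset (subset_convexHull ℝ _ hx) (subset_convexHull ℝ _ hy)
  by_contra! hno
  refine hac ((segment_subset_of_locallyConvexAt (Q := P ∩ H)
    (hP.inter ((toFinite _).isCompact_convexHull (𝕜 := ℝ)).isClosed)
    (subset_inter hab (hsegH (by simp) (by simp))) (subset_inter hbc (hsegH (by simp) (by simp)))
    fun x hx => ?_).trans inter_subset_left)
  have hxPH := hx (right_mem_segment ℝ a x)
  exact (locallyConvexAt_of_not_isReflexVertex hP hxPH.1
    fun hrefl => hno x hxPH.2 hrefl (hx.trans inter_subset_left)).inter hH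

theorem exists_isReflexVertex_of_path_of_not_segment_subset {P : Set Plane} {a b c d : Plane}
    (hP : IsClosed P) (hab : segment ℝ a b ⊆ P) (hbc : segment ℝ b c ⊆ P)
    (hcd : segment ℝ c d ⊆ P) (had : ¬ segment ℝ a d ⊆ P) :
    ∃ v ∈ convexHull ℝ {a, b, c, d}, IsReflexVertex P v ∧ segment ℝ a v ⊆ P := by
  by_cases hac : segment ℝ a c ⊆ P
  · obtain ⟨v, hv, hvP⟩ := exists_isReflexVertex_of_not_segment_subset hP hac hcd had
    exact ⟨v, convexHull_mono (by intro x; simp; tauto) hv, hvP⟩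
  · obtain ⟨v, hv, hvP⟩ := exists_isReflexVertex_of_not_segment_subset hP hab hbc hac
    exact ⟨v, convexHull_mono (by intro x; simp; tauto) hv, hvP⟩

end ReflexVertices

section UnitCube

variable {ι : Type*}

def unitCube (a : EuclideanSpace ℝ ι) : Set (EuclideanSpace ℝ ι) :=
  {x | ∀ i, a i ≤ x i ∧ x i ≤ a i + 1}

theorem convex_unitCube (a : EuclideanSpace ℝ ι) : Convex ℝ (unitCube a) := by
  intro x hx y hy s t hs ht hst i
  simp only [PiLp.add_apply, PiLp.smul_apply, smul_eq_mul]
  obtain ⟨hx₀, hx₁⟩ := hx i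
  obtain ⟨hy₀, hy₁⟩ := hy i
  obtain rfl : t = 1 - s := by linarith
  constructor <;> nlinarith

theorem dist_le_sqrt_card_of_mem_unitCube [Fintype ι] {a x y : EuclideanSpace ℝ ι}
    (hx : x ∈ unitCube a) (hy : y ∈ unitCube a) : dist x y ≤ √(Fintype.card ι) := by
  rw [EuclideanSpace.dist_eq]
  gcongr
  refine (Finset.sum_le_card_nsmul _ _ 1 fun i _ => ?_).trans (by simp)
  rw [Real.dist_eq, sq_abs]
  nlinarith [hx i, hy i]

end UnitCube

theorem blocked_pair_sees_reflex_vertex_general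
    (P : Set Plane) (hP : IsPolygonalRegion P)
    (p q z₁ z₂ : Plane)
    (a : Plane)
    (hsq : ∀ x ∈ ({p, q, z₁, z₂} : Set Plane), ∀ i : Fin 2, a i ≤ x i ∧ x i ≤ a i + 1)
    (h1 : segment ℝ p z₁ ⊆ P) (h2 : segment ℝ q z₂ ⊆ P) (h3 : segment ℝ z₁ z₂ ⊆ P)
    (hpq : ¬ segment ℝ p q ⊆ P) :
    ∃ v v' : Plane, IsReflexVertex P v ∧ IsReflexVertex P v' ∧
      v ∈ convexHull ℝ ({p, q, z₁, z₂} : Set Plane) ∧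
      v' ∈ convexHull ℝ ({p, q, z₁, z₂} : Set Plane) ∧
      segment ℝ p v ⊆ P ∧ segment ℝ q v' ⊆ P ∧
      dist p v ≤ Real.sqrt 2 ∧ dist q v' ≤ Real.sqrt 2 := by
  have hPc : IsClosed P := hP.1.isClosed
  obtain ⟨v, hv, hvr, hpv⟩ := exists_isReflexVertex_of_path_of_not_segment_subset hPc h1 h3
    (segment_symm ℝ q z₂ ▸ h2) hpq
  obtain ⟨v', hv', hv'r, hqv'⟩ := exists_isReflexVertex_of_path_of_not_segment_subset hPc h2
    (segment_symm ℝ z₁ z₂ ▸ h3) (segment_symm ℝ p z₁ ▸ h1) (segment_symm ℝ p q ▸ hpq)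
  set H := convexHull ℝ ({p, q, z₁, z₂} : Set Plane)
  replace hv : v ∈ H := convexHull_mono (by intro x; simp; tauto) hv
  replace hv' : v' ∈ H := convexHull_mono (by intro x; simp; tauto) hv'
  have hdist : ∀ {x y}, x ∈ H → y ∈ H → dist x y ≤ √2 := fun hx hy => by
    have hcube : H ⊆ unitCube a := convexHull_min hsq (convex_unitCube a)
    simpa using dist_le_sqrt_card_of_mem_unitCube (hcube hx) (hcube hy)
  refine ⟨v, v', hvr, hv'r, hv, hv', hpv, hqv', hdist ?_ hv, hdist ?_ hv'⟩ <;>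
    exact subset_convexHull ℝ _ (by simp)

/-- If `p, q, z₁, z₂ ∈ P` lie in a unit axis-parallel square, `p` sees `z₁`
within distance 1/2, `q` sees `z₂` within distance 1/2, `z₁` sees `z₂`, but `p` does not
see `q`, then `p` and `q` each see a reflex vertex of `P` lying in the convex hull of the
four points (hence within distance `√2`). -/
theorem blocked_pair_sees_reflex_vertex
    (P : Set Plane) (hP : IsPolygonalRegion P)
    (p q z₁ z₂ : Plane) (hp : p ∈ P) (hq : q ∈ P) (hz₁ : z₁ ∈ P) (hz₂ : z₂ ∈ P)
    (a : Plane)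
    (hsq : ∀ x ∈ ({p, q, z₁, z₂} : Set Plane), ∀ i : Fin 2, a i ≤ x i ∧ x i ≤ a i + 1)
    (h1 : segment ℝ p z₁ ⊆ P) (h2 : segment ℝ q z₂ ⊆ P) (h3 : segment ℝ z₁ z₂ ⊆ P)
    (hd1 : dist p z₁ ≤ 1 / 2) (hd2 : dist q z₂ ≤ 1 / 2)
    (hpq : ¬ segment ℝ p q ⊆ P) :
    ∃ v v' : Plane, IsReflexVertex P v ∧ IsReflexVertex P v' ∧
      v ∈ convexHull ℝ ({p, q, z₁, z₂} : Set Plane) ∧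
      v' ∈ convexHull ℝ ({p, q, z₁, z₂} : Set Plane) ∧
      segment ℝ p v ⊆ P ∧ segment ℝ q v' ⊆ P ∧
      dist p v ≤ Real.sqrt 2 ∧ dist q v' ≤ Real.sqrt 2 :=
  blocked_pair_sees_reflex_vertex_general P hP p q z₁ z₂ a hsq h1 h2 h3 hpq
end

section
/- Let P be a simple polygon whose set R of reflex vertices is nonempty, let p ∈ P, and let u ∈ R be a reflex vertex minimizing the geodesic distance d_P(p, ·) over R, i.e., d_P(p,u) ≤ d_P(p,v) for all v ∈ R. Then the closed segment pu is contained in P, and consequently d_P(p,u) = |p − u|. -/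
open scoped BigOperators ENNReal

/-!
Minimise `d_P(·, u)` over the set `A` of points `x` that `p` sees and that lie on a shortest
route from `p` to `u`, i.e. `|p - x| + d_P(x, u) ≤ d_P(p, u)`. A polygon is locally star-shaped
at each of its points, so `d_P(·, u)` is finite and continuous on the connected set `P`, and `A`
is compact. A minimiser `x ≠ u` cannot be reflex (`d_P(p, x) = |p - x|` would undercut
`d_P(p, u)`), so `P` is convex near `x`. Following a near-shortest path from `x` towards `u` for
a short distance `ρ` gives `y` with `d_P(y, u) ≤ d_P(x, u) - ρ`; the path `p → a → y` through a
point `a` of `[p, x]` close to `x` is then no shorter than `|p - x| + ρ`, which forces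
`x ∈ [p, y]`. Hence `y ∈ A`, contradicting the minimality of `x`.
-/

open Set Metric Filter Topology

theorem IsPreconnected.inter_frontier_nonempty {X : Type*} [TopologicalSpace X] {s t : Set X}
    (hs : IsPreconnected s) (hst : (s ∩ t).Nonempty) (hst' : (s \ t).Nonempty) :
    (s ∩ frontier t).Nonempty := by
  by_contra h
  have hsub : s ⊆ interior t ∪ (closure t)ᶜ := fun x hx => by
    by_cases hc : x ∈ closure t
    · exact Or.inl (by_contra fun hi => h ⟨x, hx, hc, hi⟩)
    · exact Or.inr hc
  obtain ⟨x, hxs, hxt⟩ := hst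
  obtain ⟨y, hys, hyt⟩ := hst'
  obtain ⟨z, -, hzi, hzc⟩ := hs _ _ isOpen_interior isClosed_closure.isOpen_compl hsub
    ⟨x, hxs, (hsub hxs).resolve_right (not_not.2 (subset_closure hxt))⟩
    ⟨y, hys, (hsub hys).resolve_left fun hi => hyt (interior_subset hi)⟩
  exact hzc (subset_closure (interior_subset hzi))

theorem HomeoToDisk.isConnected {P : Set Plane} (h : HomeoToDisk P) : IsConnected P := by
  obtain ⟨e⟩ := h
  have : ConnectedSpace unitDisk := isConnected_iff_connectedSpace.1
    ⟨⟨0, mem_closedBall_self zero_le_one⟩, (convex_closedBall (0 : Plane) 1).isPreconnected⟩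
  exact isConnected_iff_connectedSpace.2 (e.symm.surjective.connectedSpace e.symm.continuous)

section Segment

variable {E : Type*} [NormedAddCommGroup E] [NormedSpace ℝ E]

theorem isClosed_segment (x y : E) : IsClosed (segment ℝ x y) := by
  rw [segment_eq_image_lineMap]
  exact (isCompact_Icc.image AffineMap.lineMap_continuous).isClosed

theorem IsClosed.setOf_segment_subset {P : Set E} (hP : IsClosed P) (p : E) :
    IsClosed {x | segment ℝ p x ⊆ P} := by
  have : {x | segment ℝ p x ⊆ P} =
      ⋂ t ∈ Icc (0 : ℝ) 1, (fun x => AffineMap.lineMap p x t) ⁻¹' P := by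
    ext x
    simp only [mem_ofPred_eq, segment_eq_image_lineMap, image_subset_iff, mem_iInter₂]
    rfl
  rw [this]
  exact isClosed_biInter fun t _ => hP.preimage (by fun_prop)

theorem IsClosed.setOf_segment_subset_dist_add_le {P : Set E} (hP : IsClosed P) {f : E → ℝ}
    (hf : ContinuousOn f P) (p : E) (c : ℝ) :
    IsClosed {y ∈ P | segment ℝ p y ⊆ P ∧ dist p y + f y ≤ c} := by
  have hg : ContinuousOn (fun y => dist p y + f y) P :=
    (continuous_const.dist continuous_id).continuousOn.add hf
  convert (hg.preimage_isClosed_of_isClosed hP (isClosed_Iic (a := c))).inter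
    (hP.setOf_segment_subset p) using 1
  ext y
  simp only [mem_inter_iff, mem_preimage, mem_Iic, mem_ofPred_eq]
  tauto

theorem Wbtw.segment_subset_union {p x y : E} (h : Wbtw ℝ p x y) :
    segment ℝ p y ⊆ segment ℝ p x ∪ segment ℝ x y := by
  intro z hz
  rw [mem_segment_iff_wbtw] at hz
  obtain ⟨s, hs, rfl⟩ := h
  obtain ⟨t, ht, rfl⟩ := hz
  rw [mem_union, mem_segment_iff_wbtw, mem_segment_iff_wbtw]
  rcases wbtw_or_wbtw_smul_vadd_of_nonneg p (y -ᵥ p) ht.1 hs.1 with h' | h'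
  · exact Or.inl h'
  · exact Or.inr (Wbtw.trans_left_right ⟨t, ht, rfl⟩ h')

theorem Wbtw.wbtw_of_dist_add_dist_le [StrictConvexSpace ℝ E] {p a x y : E}
    (hpax : Wbtw ℝ p a x) (hax : a ≠ x) (h : dist p x + dist x y ≤ dist p a + dist a y) :
    Wbtw ℝ p x y := by
  have haxy : Wbtw ℝ a x y := by
    rw [← dist_add_dist_eq_iff]
    linarith [hpax.dist_add_dist, dist_triangle a x y]
  exact hpax.trans_expand_right haxy hax

def IsLocallyStarConvex (P : Set E) : Prop := ∀ x ∈ P, ∀ᶠ y in 𝓝[P] x, segment ℝ x y ⊆ P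

/-- The edges not through `v` keep a positive distance from `v`. If a shorter segment `[v, x]`
with `x ∈ P` left `P` at `z`, then `[z, x]` would cross the frontier at some `w`, necessarily on an
edge through `v`, and that edge would contain `[v, w] ∋ z`. -/
theorem isLocallyStarConvex_of_frontier_eq_biUnion_segment {P : Set E} (hP : IsClosed P)
    {S : Finset (E × E)} (hS : frontier P = ⋃ e ∈ S, segment ℝ e.1 e.2) :
    IsLocallyStarConvex P := by
  classical
  intro v _
  set F := ⋃ e ∈ S.filter (fun e => v ∉ segment ℝ e.1 e.2), segment ℝ e.1 e.2
  have hvF : v ∉ F := by simp [F]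
  obtain ⟨ε, hε, hball⟩ := Metric.isOpen_iff.1
    (isClosed_biUnion_finset fun e _ => isClosed_segment e.1 e.2).isOpen_compl v hvF
  filter_upwards [self_mem_nhdsWithin, mem_nhdsWithin_of_mem_nhds (ball_mem_nhds v hε)]
    with x hxP hxε z hz
  by_contra hzP
  obtain ⟨w, hw, hwP⟩ := (convex_segment z x).isPreconnected.inter_frontier_nonempty
    ⟨x, right_mem_segment ℝ z x, hxP⟩ ⟨z, left_mem_segment ℝ z x, hzP⟩
  have hvzx : Wbtw ℝ v z x := mem_segment_iff_wbtw.1 hz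
  have hzwx : Wbtw ℝ z w x := mem_segment_iff_wbtw.1 hw
  have hwF : w ∉ F := hball <|
    (convex_ball v ε).segment_subset (mem_ball_self hε) hxε (hvzx.trans_right hzwx).mem_segment
  rw [hS, mem_iUnion₂] at hwP
  obtain ⟨e, he, hwe⟩ := hwP
  have hve : v ∈ segment ℝ e.1 e.2 := by
    by_contra hve
    exact hwF (mem_iUnion₂.2 ⟨e, Finset.mem_filter.2 ⟨he, hve⟩, hwe⟩)
  have hvw : segment ℝ v w ⊆ frontier P := hS ▸ ((convex_segment _ _).segment_subset hve hwe).trans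
    (subset_biUnion_of_mem (u := fun e => segment ℝ e.1 e.2) he)
  exact hzP (hP.frontier_subset (hvw (hvzx.trans_right_left hzwx).mem_segment))

end Segment

section GeodesicDistance

variable {P : Set Plane}

theorem geoDist_le_eVariationOn_Icc {f : ℝ → Plane} {a b : ℝ} (hab : a < b)
    (hf : ContinuousOn f (Icc a b)) (hfP : MapsTo f (Icc a b) P) :
    geoDist P (f a) (f b) ≤ eVariationOn f (Icc a b) := by
  set φ : ℝ → ℝ := fun s => (b - a) * s + a
  have hφ : φ '' Icc 0 1 = Icc a b := by
    rw [image_affine_Icc' (sub_pos.2 hab)]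
    norm_num
  have hφmono : MonotoneOn φ (Icc 0 1) := fun s _ t _ hst => by
    simp only [φ]
    nlinarith
  calc geoDist P (f a) (f b) = geoDist P ((f ∘ φ) 0) ((f ∘ φ) 1) := by simp [φ]
    _ ≤ eVariationOn (f ∘ φ) (Icc 0 1) :=
        iInf₂_le (f ∘ φ) ⟨hf.comp (by fun_prop) (hφ ▸ mapsTo_image φ _),
          hfP.comp (hφ ▸ mapsTo_image φ _), rfl, rfl⟩
    _ = eVariationOn f (Icc a b) := by
        rw [eVariationOn.comp_eq_of_monotoneOn f φ hφmono, hφ]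

theorem exists_path_of_geoDist_lt {p q : Plane} {c : ℝ≥0∞} (h : geoDist P p q < c) :
    ∃ f : ℝ → Plane, Continuous f ∧ (∀ t, f t ∈ P) ∧ f 0 = p ∧ f 1 = q ∧
      eVariationOn f (Icc 0 1) < c := by
  obtain ⟨f, ⟨hf, hfP, rfl, rfl⟩, hfc⟩ := by simpa only [geoDist, iInf_lt_iff] using h
  have hproj : EqOn (f ∘ Subtype.val ∘ projIcc (0 : ℝ) 1 zero_le_one) f (Icc 0 1) :=
    fun t ht => by simp [projIcc_of_mem _ ht]
  refine ⟨f ∘ Subtype.val ∘ projIcc 0 1 zero_le_one,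
    hf.comp_continuous (continuous_subtype_val.comp continuous_projIcc)
      fun t => (projIcc 0 1 _ t).2,
    fun t => hfP (projIcc 0 1 _ t).2, hproj (left_mem_Icc.2 zero_le_one),
    hproj (right_mem_Icc.2 zero_le_one), ?_⟩
  rwa [eVariationOn.eq_of_eqOn hproj]

theorem edist_le_geoDist (p q : Plane) : edist p q ≤ geoDist P p q :=
  le_iInf₂ fun f ⟨_, _, h0, h1⟩ => h0 ▸ h1 ▸
    eVariationOn.edist_le f (left_mem_Icc.2 zero_le_one) (right_mem_Icc.2 zero_le_one)

theorem geoDist_le_edist_of_segment_subset {p q : Plane} (h : segment ℝ p q ⊆ P) :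
    geoDist P p q ≤ edist p q := by
  have hP : MapsTo (AffineMap.lineMap p q) (Icc (0 : ℝ) 1) P := fun t ht =>
    h (segment_eq_image_lineMap ℝ p q ▸ mem_image_of_mem _ ht)
  calc geoDist P p q
      = geoDist P (AffineMap.lineMap p q (0 : ℝ)) (AffineMap.lineMap p q (1 : ℝ)) := by simp
    _ ≤ eVariationOn (AffineMap.lineMap p q ∘ id) (Icc (0 : ℝ) 1) :=
        geoDist_le_eVariationOn_Icc zero_lt_one AffineMap.lineMap_continuous.continuousOn hP
    _ ≤ nndist p q * eVariationOn id (Icc (0 : ℝ) 1) :=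
        (lipschitzWith_lineMap p q).lipschitzOnWith.comp_eVariationOn_le (mapsTo_univ _ _)
    _ = edist p q := by
        rw [eVariationOn_id_Icc, sub_zero, ENNReal.ofReal_one, mul_one, edist_nndist]

theorem geoDist_eq_of_segment_subset {p q : Plane} (h : segment ℝ p q ⊆ P) :
    geoDist P p q = ENNReal.ofReal (dist p q) := by
  rw [← edist_dist]
  exact le_antisymm (geoDist_le_edist_of_segment_subset h) (edist_le_geoDist p q)

theorem geoDist_triangle (x y z : Plane) : geoDist P x z ≤ geoDist P x y + geoDist P y z := by
  refine ENNReal.le_of_forall_pos_le_add fun ε hε hlt => ?_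
  have hε2 : (ε / 2 : ℝ≥0∞) ≠ 0 := by simpa using hε.ne'
  obtain ⟨f, hf, hfP, rfl, rfl, hfv⟩ := exists_path_of_geoDist_lt
    (ENNReal.lt_add_right (lt_of_le_of_lt le_self_add hlt).ne hε2)
  obtain ⟨g, hg, hgP, hg0, rfl, hgv⟩ := exists_path_of_geoDist_lt
    (ENNReal.lt_add_right (lt_of_le_of_lt le_add_self hlt).ne hε2)
  set F : ℝ → Plane := fun t => if t ≤ 1 then f t else g (t - 1)
  have hF : Continuous F :=
    Continuous.if_le hf (hg.comp (continuous_sub_right 1)) continuous_id continuous_const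
      fun t ht => by simp [ht, hg0]
  have hF₂ : EqOn F (g ∘ fun t => t - 1) (Icc 1 2) := fun t ht => by
    rcases ht.1.eq_or_lt with rfl | h1
    · simp [F, hg0]
    · simp [F, not_le.2 h1]
  have hvar₁ : eVariationOn F (Icc 0 1) = eVariationOn f (Icc 0 1) :=
    eVariationOn.eq_of_eqOn fun t ht => if_pos ht.2
  have hvar₂ : eVariationOn F (Icc 1 2) = eVariationOn g (Icc 0 1) := by
    rw [eVariationOn.eq_of_eqOn hF₂, eVariationOn.comp_eq_of_monotoneOn g _
      fun _ _ _ _ h => sub_le_sub_right h 1, image_sub_const_Icc]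
    norm_num
  calc geoDist P (f 0) (g 1) = geoDist P (F 0) (F 2) := by norm_num [F]
    _ ≤ eVariationOn F (Icc 0 2) :=
        geoDist_le_eVariationOn_Icc two_pos hF.continuousOn fun t _ => by
          by_cases ht : t ≤ 1 <;> simp [F, ht, hfP, hgP]
    _ = eVariationOn f (Icc 0 1) + eVariationOn g (Icc 0 1) := by
        rw [← hvar₁, ← hvar₂]
        simpa using (eVariationOn.Icc_add_Icc F zero_le_one one_le_two (mem_univ (1 : ℝ))).symm
    _ ≤ geoDist P (f 0) (f 1) + ε / 2 + (geoDist P (f 1) (g 1) + ε / 2) :=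
        add_le_add hfv.le hgv.le
    _ = geoDist P (f 0) (f 1) + geoDist P (f 1) (g 1) + ε := by
        rw [add_add_add_comm, ENNReal.add_halves]

theorem IsPreconnected.geoDist_ne_top (hP : IsPreconnected P) (hstar : IsLocallyStarConvex P)
    {x y : Plane} (hx : x ∈ P) (hy : y ∈ P) : geoDist P x y ≠ ⊤ := by
  have hfin : ∀ {x y : Plane}, segment ℝ x y ⊆ P → geoDist P x y ≠ ⊤ := fun h =>
    ne_top_of_le_ne_top (edist_ne_top _ _) (geoDist_le_edist_of_segment_subset h)
  refine hP.induction₂' (fun x y => geoDist P x y ≠ ⊤) (fun x hx => ?_)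
    (fun x y z _ _ _ hxy hyz => ne_top_of_le_ne_top (ENNReal.add_ne_top.2 ⟨hxy, hyz⟩)
      (geoDist_triangle x y z)) hx hy
  filter_upwards [hstar x hx] with y hxy
  exact ⟨hfin hxy, hfin (segment_symm ℝ x y ▸ hxy)⟩

theorem dist_le_geoDist_toReal {x y : Plane} (h : geoDist P x y ≠ ⊤) :
    dist x y ≤ (geoDist P x y).toReal :=
  (ENNReal.ofReal_le_iff_le_toReal h).1 (edist_dist x y ▸ edist_le_geoDist x y)

theorem geoDist_toReal_le_dist_add {x y w : Plane} (hxy : segment ℝ x y ⊆ P)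
    (hyw : geoDist P y w ≠ ⊤) :
    (geoDist P x w).toReal ≤ dist x y + (geoDist P y w).toReal := by
  have h := (geoDist_triangle x y w).trans
    (add_le_add_left (geoDist_le_edist_of_segment_subset hxy) _)
  rw [edist_dist] at h
  have := ENNReal.toReal_mono (ENNReal.add_ne_top.2 ⟨ENNReal.ofReal_ne_top, hyw⟩) h
  rwa [ENNReal.toReal_add ENNReal.ofReal_ne_top hyw, ENNReal.toReal_ofReal dist_nonneg] at this

theorem IsLocallyStarConvex.continuousOn_geoDist_toReal (hstar : IsLocallyStarConvex P)
    {w : Plane} (hfin : ∀ x ∈ P, geoDist P x w ≠ ⊤) :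
    ContinuousOn (fun x => (geoDist P x w).toReal) P := by
  intro x hx
  have hle : ∀ᶠ y in 𝓝[P] x,
      dist (geoDist P y w).toReal (geoDist P x w).toReal ≤ dist y x := by
    filter_upwards [hstar x hx, self_mem_nhdsWithin] with y hxy hy
    rw [Real.dist_eq, abs_sub_le_iff]
    constructor <;> linarith [geoDist_toReal_le_dist_add (segment_symm ℝ x y ▸ hxy) (hfin x hx),
      geoDist_toReal_le_dist_add hxy (hfin y hy), dist_comm x y]
  refine tendsto_iff_dist_tendsto_zero.2
    (squeeze_zero' (Eventually.of_forall fun _ => dist_nonneg) hle ?_)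
  exact tendsto_nhdsWithin_of_tendsto_nhds
    ((continuous_id.dist continuous_const).tendsto' x 0 (dist_self x))

theorem exists_dist_eq_geoDist_add_lt {x u : Plane} {ρ : ℝ} {c : ℝ≥0∞}
    (hc : geoDist P x u < c) (hρ : 0 ≤ ρ) (hρu : ρ < dist x u) :
    ∃ y ∈ P, dist x y = ρ ∧ geoDist P y u + ENNReal.ofReal ρ < c := by
  obtain ⟨f, hf, hfP, rfl, rfl, hfc⟩ := exists_path_of_geoDist_lt hc
  obtain ⟨t, ht, htρ⟩ : ∃ t ∈ Icc (0 : ℝ) 1, dist (f 0) (f t) = ρ :=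
    intermediate_value_Icc zero_le_one (continuous_const.dist hf).continuousOn
      ⟨by simpa using hρ, hρu.le⟩
  have ht1 : t < 1 := ht.2.lt_of_ne (by rintro rfl; exact hρu.ne' htρ)
  refine ⟨f t, hfP t, htρ, lt_of_le_of_lt ?_ hfc⟩
  calc geoDist P (f t) (f 1) + ENNReal.ofReal ρ
      ≤ eVariationOn f (Icc t 1) + eVariationOn f (Icc 0 t) :=
        add_le_add (geoDist_le_eVariationOn_Icc ht1 hf.continuousOn fun s _ => hfP s)
          (htρ ▸ edist_dist (f 0) (f t) ▸
            eVariationOn.edist_le f (left_mem_Icc.2 ht.1) (right_mem_Icc.2 ht.1))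
    _ = eVariationOn f (Icc 0 1) := by
        rw [add_comm]
        simpa using eVariationOn.Icc_add_Icc f ht.1 ht.2 (mem_univ t)

/-- The infimum of `d_P(·, u)` over the sphere `|· - x| = ρ` is at most `d_P(x, u) - ρ` by
cutting near-shortest paths, and continuity of `d_P(·, u)` makes it a minimum. -/
theorem exists_dist_eq_geoDist_toReal_add_le (hP : IsCompact P) {u : Plane}
    (hd : ContinuousOn (fun y => (geoDist P y u).toReal) P) (hfin : ∀ y ∈ P, geoDist P y u ≠ ⊤)
    {x : Plane} (hx : x ∈ P) {ρ : ℝ} (hρ : 0 ≤ ρ) (hρu : ρ < dist x u) :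
    ∃ y ∈ P, dist x y = ρ ∧ (geoDist P y u).toReal + ρ ≤ (geoDist P x u).toReal := by
  have hS : ∀ z ∈ P, dist x z = ρ → z ∈ P ∩ sphere x ρ := fun z hz hxz =>
    ⟨hz, mem_sphere.2 (dist_comm z x ▸ hxz)⟩
  obtain ⟨y₀, hy₀, hxy₀, -⟩ :=
    exists_dist_eq_geoDist_add_lt (ENNReal.lt_add_right (hfin x hx) one_ne_zero) hρ hρu
  obtain ⟨y, ⟨hy, hxy⟩, hmin⟩ := (hP.inter_right isClosed_sphere).exists_isMinOn
    ⟨y₀, hS y₀ hy₀ hxy₀⟩ (hd.mono inter_subset_left)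
  refine ⟨y, hy, dist_comm x y ▸ mem_sphere.1 hxy, le_of_forall_pos_le_add fun ε hε => ?_⟩
  obtain ⟨z, hz, hxz, hzu⟩ := exists_dist_eq_geoDist_add_lt
    (ENNReal.lt_add_right (hfin x hx) (ENNReal.ofReal_pos.2 hε).ne') hρ hρu
  rw [← ENNReal.ofReal_toReal (hfin z hz), ← ENNReal.ofReal_toReal (hfin x hx),
    ← ENNReal.ofReal_add ENNReal.toReal_nonneg hρ,
    ← ENNReal.ofReal_add ENNReal.toReal_nonneg hε.le,
    ENNReal.ofReal_lt_ofReal_iff_of_nonneg (by positivity)] at hzu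
  linarith [isMinOn_iff.1 hmin z (hS z hz hxz)]

end GeodesicDistance

theorem exists_convex_inter_closedBall_of_not_isReflexVertex {P : Set Plane} (hP : IsClosed P)
    {v : Plane} (hv : v ∈ P) (hnr : ¬IsReflexVertex P v) {ε : ℝ} (hε : 0 < ε) :
    ∃ ρ ∈ Ioo 0 ε, Convex ℝ (P ∩ closedBall v ρ) := by
  by_cases hvf : v ∈ frontier P
  · simp only [IsReflexVertex, hvf, true_and] at hnr
    push Not at hnr
    obtain ⟨ρ, hρ, hρε, hconv⟩ := hnr (ε / 2) (half_pos hε)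
    exact ⟨ρ, ⟨hρ, hρε.trans_lt (half_lt_self hε)⟩, hconv⟩
  · obtain ⟨δ, hδ, hball⟩ := Metric.isOpen_iff.1 isOpen_interior v
      (by simpa [hP.frontier_eq, hv] using hvf)
    set ρ := min (ε / 2) (δ / 2)
    have hρP : closedBall v ρ ⊆ P := fun z hz => interior_subset <| hball <|
      (closedBall_subset_ball ((min_le_right _ _).trans_lt (half_lt_self hδ))) hz
    refine ⟨ρ, ⟨by positivity, (min_le_left _ _).trans_lt (half_lt_self hε)⟩, ?_⟩
    rw [inter_eq_self_of_subset_right hρP]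
    exact convex_closedBall v ρ

/-- `p`, `x` and `y` are aligned because the path `p → a → y` through a point `a ≠ x` of `[p, x]`
near `x`, which lies in `P` by convexity, is at least as long as `|p - x| + |x - y|`. -/
theorem segment_subset_of_dist_add_geoDist_toReal_le {P : Set Plane} {p x y u : Plane} {ρ : ℝ}
    (hfin : ∀ z ∈ P, geoDist P z u ≠ ⊤) (hpx : segment ℝ p x ⊆ P) (hρ : 0 < ρ)
    (hK : Convex ℝ (P ∩ closedBall x ρ)) (hy : y ∈ P ∩ closedBall x ρ)
    (h : dist p x + dist x y + (geoDist P y u).toReal ≤ (geoDist P p u).toReal) :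
    segment ℝ p y ⊆ P := by
  have hxK : x ∈ P ∩ closedBall x ρ := ⟨hpx (right_mem_segment ℝ p x), mem_closedBall_self hρ.le⟩
  have hxy : segment ℝ x y ⊆ P := fun z hz => (hK.segment_subset hxK hy hz).1
  rcases eq_or_ne x p with rfl | hxp
  · exact hxy
  set t := min 1 (ρ / dist x p)
  have ht : t ∈ Icc (0 : ℝ) 1 := ⟨by positivity, min_le_left _ _⟩
  set a := AffineMap.lineMap x p t
  have hpax : Wbtw ℝ p a x := (show Wbtw ℝ x a p from ⟨t, ht, rfl⟩).symm
  have hax : a ≠ x := by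
    rw [Ne, AffineMap.lineMap_eq_left_iff, not_or]
    exact ⟨hxp, (lt_min one_pos (div_pos hρ (dist_pos.2 hxp))).ne'⟩
  have haK : a ∈ P ∩ closedBall x ρ := by
    refine ⟨hpx hpax.mem_segment, ?_⟩
    rw [mem_closedBall, dist_lineMap_left, Real.norm_of_nonneg ht.1]
    calc t * dist x p ≤ ρ / dist x p * dist x p := by gcongr; exact min_le_right _ _
      _ = ρ := div_mul_cancel₀ ρ (dist_ne_zero.2 hxp)
  have hpa : segment ℝ p a ⊆ P :=
    ((convex_segment p x).segment_subset (left_mem_segment ℝ p x) hpax.mem_segment).trans hpx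
  have hay : segment ℝ a y ⊆ P := fun z hz => (hK.segment_subset haK hy hz).1
  have hpay : (geoDist P p u).toReal ≤ dist p a + dist a y + (geoDist P y u).toReal := by
    linarith [geoDist_toReal_le_dist_add hpa (hfin a haK.1),
      geoDist_toReal_le_dist_add hay (hfin y hy.1)]
  have hpxy : Wbtw ℝ p x y := hpax.wbtw_of_dist_add_dist_le hax (by linarith)
  exact hpxy.segment_subset_union.trans (union_subset hpx hxy)

theorem nearest_reflex_vertex_is_visible_general
    (P : Set Plane) (hP : IsSimplePolygon P)
    (p : Plane) (hp : p ∈ P)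
    (u : Plane) (hu : IsReflexVertex P u)
    (hmin : ∀ v : Plane, IsReflexVertex P v → geoDist P p u ≤ geoDist P p v) :
    segment ℝ p u ⊆ P ∧ geoDist P p u = ENNReal.ofReal (dist p u) := by
  obtain ⟨hPc, hdisk, S, -, hS⟩ := hP
  have hstar := isLocallyStarConvex_of_frontier_eq_biUnion_segment hPc.isClosed hS
  have hfin : ∀ y ∈ P, geoDist P y u ≠ ⊤ := fun y hy =>
    hdisk.isConnected.isPreconnected.geoDist_ne_top hstar hy (hPc.isClosed.frontier_subset hu.1)
  set d : Plane → ℝ := fun y => (geoDist P y u).toReal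
  have hd : ContinuousOn d P := hstar.continuousOn_geoDist_toReal hfin
  set A := {y ∈ P | segment ℝ p y ⊆ P ∧ dist p y + d y ≤ d p}
  have hA : IsCompact A := hPc.of_isClosed_subset
    (hPc.isClosed.setOf_segment_subset_dist_add_le hd p (d p)) fun y hy => hy.1
  obtain ⟨x, ⟨hxP, hpx, hx⟩, hxmin⟩ :=
    hA.exists_isMinOn ⟨p, hp, by simp [hp], by simp⟩ (hd.mono fun y hy => hy.1)
  suffices hxu : x = u from ⟨hxu ▸ hpx, geoDist_eq_of_segment_subset (hxu ▸ hpx)⟩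
  by_contra hxu
  have hdx : dist x u ≤ d x := dist_le_geoDist_toReal (hfin x hxP)
  have hnr : ¬IsReflexVertex P x := fun hr => by
    have : d p ≤ dist p x := ENNReal.toReal_le_of_le_ofReal dist_nonneg
      ((hmin x hr).trans (geoDist_eq_of_segment_subset hpx).le)
    linarith [dist_pos.2 hxu]
  obtain ⟨ρ, ⟨hρ, hρx⟩, hK⟩ :=
    exists_convex_inter_closedBall_of_not_isReflexVertex hPc.isClosed hxP hnr (dist_pos.2 hxu)
  obtain ⟨y, hyP, hxy, hy⟩ := exists_dist_eq_geoDist_toReal_add_le hPc hd hfin hxP hρ.le hρx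
  have hyA : y ∈ A := ⟨hyP, segment_subset_of_dist_add_geoDist_toReal_le hfin hpx hρ hK
    ⟨hyP, mem_closedBall'.2 hxy.le⟩ (by linarith), by linarith [dist_triangle p x y]⟩
  linarith [isMinOn_iff.1 hxmin y hyA]

/-- In a simple polygon, every point sees its geodesically nearest reflex
vertex along a straight segment, so the geodesic distance to it equals the Euclidean
distance. -/
theorem nearest_reflex_vertex_is_visible
    (P : Set Plane) (hP : IsSimplePolygon P)
    (hR : {v | IsReflexVertex P v}.Nonempty)
    (p : Plane) (hp : p ∈ P)
    (u : Plane) (hu : IsReflexVertex P u)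
    (hmin : ∀ v : Plane, IsReflexVertex P v → geoDist P p u ≤ geoDist P p v) :
    segment ℝ p u ⊆ P ∧ geoDist P p u = ENNReal.ofReal (dist p u) :=
  nearest_reflex_vertex_is_visible_general P hP p hp u hu hmin
end
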